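/- Assume Hypothesis (HA), let k ≥ 1 be a natural number such that σ_per(P) = {λ e^{2πi j/k} : j = 0, 1, …, k−1}, and let g_0, …, g_{k−1} : M → [0,∞) be linearly independent continuous functions with pairwise disjoint supports {g_i > 0}, whose complex span equals ker(P^k − λ^k) in L^∞(M,μ;ℂ), and with ∫_M g_i dμ = μ({g > 0}) for each i. Then the functions can be relabelled so that P g_i = λ g_{i−1 (mod k)} for every i ∈ {0,…,k−1}; moreover, with this labelling, g = (1/k) Σ_{i=0}^{k−1} g_i. -/

import Mathlib

/-!
Since `P` commutes with `P^k`, it preserves `ker(P^k - lam^k) = span{g_i}`; by the strong Feller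
property and the disjoint supports it acts there by a nonnegative matrix `A` with `A^k = lam^k`,
and integrating against `P^*μ = lam μ` shows that every row of `A` sums to `lam`. A nonnegative
matrix with a nonnegative inverse has a single positive entry in each row, so
`P g_i = lam g_{τ i}` for a permutation `τ`. The coefficients `c` of an eigenfunction for
`lam e^{2πi/k}` satisfy `c ∘ τ⁻¹ = e^{2πi/k} c`, which makes `τ` a single `k`-cycle; labelling
along the cycle gives `P g_i = lam g_{i-1}`. Finally `(1/k) ∑ g_i` is a continuous
`lam`-eigenfunction with the same mass as `g`, hence equal to `g`.
-/

open MeasureTheory ProbabilityTheory Filter Topology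

namespace QEM

noncomputable section

variable {M : Type*} [MetricSpace M] [CompactSpace M] [MeasurableSpace M] [BorelSpace M]

/-- The weighted Koopman operator on real-valued functions:
`P f (x) = e^{φ(x)} ∫ f(y) κ(x,dy)`. -/
def PR (φ : M → ℝ) (κ : Kernel M M) (f : M → ℝ) : M → ℝ :=
  fun x => Real.exp (φ x) * ∫ y, f y ∂(κ x)

/-- The weighted Koopman operator on complex-valued functions
(`P f := P(Re f) + i P(Im f)`, equivalently with the complex Bochner integral). -/
def PC (φ : M → ℝ) (κ : Kernel M M) (f : M → ℂ) : M → ℂ :=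
  fun x => (Real.exp (φ x) : ℂ) * ∫ y, f y ∂(κ x)

/-- Bounded measurable real-valued functions. -/
def BddMeas (f : M → ℝ) : Prop := Measurable f ∧ ∃ C : ℝ, ∀ x, |f x| ≤ C

/-- Bounded measurable complex-valued functions. -/
def BddMeasC (f : M → ℂ) : Prop := Measurable f ∧ ∃ C : ℝ, ∀ x, ‖f x‖ ≤ C

/-- The operator `P_g f := P (1_{g>0} · f)`. -/
def Pg (φ : M → ℝ) (κ : Kernel M M) (g : M → ℝ) : (M → ℝ) → (M → ℝ) :=
  fun f => PR φ κ (Set.indicator {x | 0 < g x} f)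

/-- Complex version of `P_g`. -/
def PgC (φ : M → ℝ) (κ : Kernel M M) (g : M → ℝ) : (M → ℂ) → (M → ℂ) :=
  fun f => PC φ κ (Set.indicator {x | 0 < g x} f)

/-- The indicator function of `{g > 0}`. -/
def oneG (g : M → ℝ) : M → ℝ := Set.indicator {x | 0 < g x} (fun _ => (1 : ℝ))

/-- The normalized restriction `μ̃` of `μ` to `{g > 0}`, i.e.
`μ̃(A) = μ(A ∩ {g>0}) / μ({g>0})`. -/
def mtilde (μ : Measure M) (g : M → ℝ) : Measure M :=
  (μ {x | 0 < g x})⁻¹ • μ.restrict {x | 0 < g x}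

/-- The root-of-unity phase `e^{2πi j/k}`. -/
def rootU (k j : ℕ) : ℂ := Complex.exp (2 * (Real.pi : ℂ) * Complex.I * (j : ℂ) / (k : ℂ))

/-- Basic standing setup: `μ` is a fully supported Borel probability measure, `κ` a
sub-Markov kernel with `κ(x,·) ≪ μ` for all `x`, and `φ` a (bounded) continuous function. -/
structure Setup (μ : Measure M) (κ : Kernel M M) (φ : M → ℝ) : Prop where
  prob : IsProbabilityMeasure μ
  fullSupp : ∀ U : Set M, IsOpen U → U.Nonempty → 0 < μ U
  subMarkov : ∀ x, κ x Set.univ ≤ 1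
  ac : ∀ x, κ x ≪ μ
  contφ : Continuous φ

/-- Hypothesis (HA): (i) `P` is strong Feller; (ii) `lam > 0` equals the spectral radius of the
induced operator `T` on `L^∞(M,μ;ℂ)` (where `T` agrees a.e. with the pointwise operator `P` on
bounded measurable representatives); (iii) the eigenspace of `P` at `lam` in `L^∞(M,μ)` is
one-dimensional, spanned by a continuous nonnegative `g ≢ 0` with `P g = lam·g` and
`∫ g dμ = μ {g>0}`; (iv) `P^*μ = lam·μ`. -/
structure HypHA (μ : Measure M) (κ : Kernel M M) (φ : M → ℝ)
    (T : Lp ℂ ⊤ μ →L[ℂ] Lp ℂ ⊤ μ) (lam : ℝ) (g : M → ℝ) : Prop where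
  setup : Setup μ κ φ
  strongFeller : ∀ f : M → ℝ, BddMeas f → Continuous (PR φ κ f)
  lam_pos : 0 < lam
  Tcompat : ∀ f : M → ℂ, BddMeasC f → ∀ F : Lp ℂ ⊤ μ, ⇑F =ᵐ[μ] f →
      ⇑(T F) =ᵐ[μ] PC φ κ f
  specRad : spectralRadius ℂ T = ENNReal.ofReal lam
  g_cont : Continuous g
  g_nonneg : ∀ x, 0 ≤ g x
  g_ne : g ≠ 0
  g_eigen : PR φ κ g = fun x => lam * g x
  g_int : ∫ x, g x ∂μ = (μ {x | 0 < g x}).toReal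
  eigen_dim : ∀ f : M → ℝ, BddMeas f → PR φ κ f =ᵐ[μ] (fun x => lam * f x) →
      ∃ c : ℝ, f =ᵐ[μ] fun x => c * g x
  Pstar : ∀ f : M → ℝ, BddMeas f → ∫ x, PR φ κ f x ∂μ = lam * ∫ x, f x ∂μ

/-- Membership in the point peripheral spectrum `σ_per(P)`:
`|α| = lam` and `P f = α f` for some nonzero `f ∈ L^∞(M,μ;ℂ)`. -/
def PerSpec (μ : Measure M) (κ : Kernel M M) (φ : M → ℝ) (lam : ℝ) (α : ℂ) : Prop :=
  ‖α‖ = lam ∧ ∃ f : M → ℂ, BddMeasC f ∧ ¬ (f =ᵐ[μ] 0) ∧ PC φ κ f =ᵐ[μ] fun x => α * f x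

/-- `σ_per(P) = {lam·e^{2πi j/k} : j = 0, …, k-1}`. -/
def PerSpecEq (μ : Measure M) (κ : Kernel M M) (φ : M → ℝ) (lam : ℝ) (k : ℕ) : Prop :=
  ∀ α : ℂ, PerSpec μ κ φ lam α ↔ ∃ j : ℕ, j < k ∧ α = (lam : ℂ) * rootU k j

/-- A family of `k` linearly independent, nonnegative, continuous functions with pairwise
disjoint supports, spanning `ker(P^k - lam^k)` in `L^∞(M,μ;ℂ)`, each of integral `μ {g>0}`. -/
structure PreFamily (μ : Measure M) (κ : Kernel M M) (φ : M → ℝ) (lam : ℝ) (g : M → ℝ)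
    (k : ℕ) (gi : Fin k → M → ℝ) : Prop where
  cont : ∀ i, Continuous (gi i)
  nonneg : ∀ i x, 0 ≤ gi i x
  indep : LinearIndependent ℝ gi
  span_ker : ∀ f : M → ℂ, BddMeasC f →
      (((PC φ κ)^[k] f) =ᵐ[μ] fun x => (lam : ℂ) ^ k * f x) ↔
        ∃ c : Fin k → ℂ, f =ᵐ[μ] fun x => ∑ i, c i * (gi i x : ℂ)
  integral : ∀ i, ∫ x, gi i x ∂μ = (μ {x | 0 < g x}).toReal
  disj : ∀ i j, i ≠ j → ∀ x, ¬ (0 < gi i x ∧ 0 < gi j x)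

/-- The cyclic family hypothesis: nonnegative continuous `g_0, …, g_{k-1}` supported in `{g>0}`
with pairwise disjoint supports, spanning `ker(P^k - lam^k)` in `L^∞(M,μ;ℂ)`, with
`∫ g_i dμ = μ {g>0}`, `P g_i = lam·g_{i-1 (mod k)}` and `g = (1/k) ∑ g_i`. -/
structure CyclicFamily (μ : Measure M) (κ : Kernel M M) (φ : M → ℝ) (lam : ℝ) (g : M → ℝ)
    (k : ℕ) [NeZero k] (gi : Fin k → M → ℝ) : Prop where
  cont : ∀ i, Continuous (gi i)
  nonneg : ∀ i x, 0 ≤ gi i x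
  supported : ∀ i x, 0 < gi i x → 0 < g x
  disj : ∀ i j, i ≠ j → ∀ x, ¬ (0 < gi i x ∧ 0 < gi j x)
  span_ker : ∀ f : M → ℂ, BddMeasC f →
      (((PC φ κ)^[k] f) =ᵐ[μ] fun x => (lam : ℂ) ^ k * f x) ↔
        ∃ c : Fin k → ℂ, f =ᵐ[μ] fun x => ∑ i, c i * (gi i x : ℂ)
  integral : ∀ i, ∫ x, gi i x ∂μ = (μ {x | 0 < g x}).toReal
  cycle : ∀ i : Fin k, PR φ κ (gi i) = fun x => lam * gi (i - 1) x
  avg : g = fun x => (1 / (k : ℝ)) * ∑ i, gi i x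

/-- The spectral decomposition hypothesis: a closed `P_g`-invariant subspace `V` of
`L^∞({g>0},μ;ℂ)` with `L^∞({g>0},μ;ℂ) = span{g_0,…,g_{k-1}} ⊕ V` and such that the spectral
radius of `P_g` restricted to `V` is `< lam` (expressed through a geometric bound on the
iterates, via Gelfand's formula). -/
structure SpecDecomp (μ : Measure M) (κ : Kernel M M) (φ : M → ℝ) (lam : ℝ) (g : M → ℝ)
    (k : ℕ) (gi : Fin k → M → ℝ) (V : Submodule ℂ (M → ℂ)) : Prop where
  meas : ∀ v ∈ V, Measurable v
  bdd : ∀ v ∈ V, ∃ C : ℝ, ∀ x, ‖v x‖ ≤ C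
  supp : ∀ v ∈ V, ∀ x, ¬ 0 < g x → v x = 0
  invariant : ∀ v ∈ V, PgC φ κ g v ∈ V
  closed : ∀ (u : ℕ → M → ℂ) (f : M → ℂ), (∀ n, u n ∈ V) → Measurable f →
      (∃ C : ℝ, ∀ x, ‖f x‖ ≤ C) → (∀ x, ¬ 0 < g x → f x = 0) →
      Tendsto (fun n => eLpNorm (u n - f) ⊤ μ) atTop (nhds 0) → f ∈ V
  decomp : ∀ f : M → ℂ, BddMeasC f → (∀ x, ¬ 0 < g x → f x = 0) →
      ∃ c : Fin k → ℂ, ∃ v ∈ V, f = fun x => (∑ i, c i * (gi i x : ℂ)) + v x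
  unique : ∀ c : Fin k → ℂ, (fun x => ∑ i, c i * (gi i x : ℂ)) ∈ V → c = 0
  gap : ∃ r : ℝ, 0 ≤ r ∧ r < lam ∧ ∃ C : ℝ, ∀ n : ℕ, ∀ v ∈ V,
      eLpNorm ((PgC φ κ g)^[n] v) ⊤ μ ≤ ENNReal.ofReal (C * r ^ n) * eLpNorm v ⊤ μ

/-- The operator `P^{k+1} - lam^{k+1}` on complex-valued functions. -/
def Qop (φ : M → ℝ) (κ : Kernel M M) (lam : ℝ) (k : ℕ) : (M → ℂ) → (M → ℂ) :=
  fun h x => (PC φ κ)^[k + 1] h x - (lam : ℂ) ^ (k + 1) * h x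

lemma BddMeas.integrable {X : Type*} [MeasurableSpace X] {ν : Measure X} [IsFiniteMeasure ν]
    {f : X → ℝ} (hf : BddMeas f) : Integrable f ν := by
  obtain ⟨C, hC⟩ := hf.2
  exact (integrable_const C).mono' hf.1.aestronglyMeasurable (ae_of_all _ hC)

lemma _root_.Continuous.bddMeas {X : Type*} [TopologicalSpace X] [CompactSpace X]
    [MeasurableSpace X] [OpensMeasurableSpace X] {f : X → ℝ} (hf : Continuous f) :
    BddMeas f := by
  obtain ⟨C, hC⟩ := (isCompact_range hf.abs).bddAbove
  exact ⟨hf.measurable, C, fun x => hC ⟨x, rfl⟩⟩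

lemma _root_.Continuous.bddMeasC {X : Type*} [TopologicalSpace X] [CompactSpace X]
    [MeasurableSpace X] [OpensMeasurableSpace X] {f : X → ℂ} (hf : Continuous f) :
    BddMeasC f := by
  obtain ⟨C, hC⟩ := (isCompact_range hf.norm).bddAbove
  exact ⟨hf.measurable, C, fun x => hC ⟨x, rfl⟩⟩

section Koopman

variable {X : Type*} [MeasurableSpace X] {φ : X → ℝ} {κ : Kernel X X}

lemma PR_const_mul (c : ℝ) (f : X → ℝ) :
    PR φ κ (fun x => c * f x) = fun x => c * PR φ κ f x := by
  funext x
  simp only [PR, integral_const_mul]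
  ring

lemma PC_const_mul (c : ℂ) (f : X → ℂ) :
    PC φ κ (fun x => c * f x) = fun x => c * PC φ κ f x := by
  funext x
  simp only [PC, integral_const_mul]
  ring

lemma PC_ofReal (f : X → ℝ) :
    PC φ κ (fun x => (f x : ℂ)) = fun x => (PR φ κ f x : ℂ) := by
  funext x
  simp only [PC, PR, integral_complex_ofReal]
  push_cast
  rfl

lemma PC_iterate_ofReal (f : X → ℝ) (n : ℕ) :
    (PC φ κ)^[n] (fun x => (f x : ℂ)) = fun x => ((PR φ κ)^[n] f x : ℂ) := by
  induction n with
  | zero => rfl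
  | succ n ih => rw [Function.iterate_succ_apply', ih, PC_ofReal, Function.iterate_succ_apply']

lemma PR_nonneg {f : X → ℝ} (hf : ∀ x, 0 ≤ f x) (x : X) : 0 ≤ PR φ κ f x :=
  mul_nonneg (Real.exp_pos _).le (integral_nonneg hf)

lemma PR_iterate_nonneg {f : X → ℝ} (hf : ∀ x, 0 ≤ f x) (n : ℕ) (x : X) :
    0 ≤ (PR φ κ)^[n] f x := by
  induction n generalizing x with
  | zero => exact hf x
  | succ n ih => rw [Function.iterate_succ_apply']; exact PR_nonneg ih x

variable {μ : Measure X}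

lemma PC_congr_ae (hac : ∀ x, κ x ≪ μ) {f h : X → ℂ} (hfh : f =ᵐ[μ] h) :
    PC φ κ f = PC φ κ h := by
  funext x
  simp only [PC]
  rw [integral_congr_ae (hfh.filter_mono (hac x).ae_le)]

lemma PC_iterate_ae_eq_pow_mul (hac : ∀ x, κ x ≪ μ) {f : X → ℂ} {α : ℂ}
    (hf : PC φ κ f =ᵐ[μ] fun x => α * f x) (n : ℕ) :
    (PC φ κ)^[n] f =ᵐ[μ] fun x => α ^ n * f x := by
  induction n with
  | zero => simp
  | succ n ih =>
    rw [Function.iterate_succ_apply', PC_congr_ae hac ih, PC_const_mul]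
    filter_upwards [hf] with x hx
    rw [hx, pow_succ]
    ring

lemma PC_iterate_PC_eq_mul (hac : ∀ x, κ x ≪ μ) {f : X → ℂ} {n : ℕ} {β : ℂ}
    (hf : (PC φ κ)^[n] f =ᵐ[μ] fun x => β * f x) :
    (PC φ κ)^[n] (PC φ κ f) = fun x => β * PC φ κ f x := by
  rw [← Function.iterate_succ_apply, Function.iterate_succ_apply', PC_congr_ae hac hf,
    PC_const_mul]

variable [IsFiniteKernel κ] {ι : Type*} [Fintype ι]

lemma PR_sum_mul {f : ι → X → ℝ} (hf : ∀ i, BddMeas (f i)) (v : ι → ℝ) :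
    PR φ κ (fun x => ∑ i, v i * f i x) = fun x => ∑ i, v i * PR φ κ (f i) x := by
  funext x
  simp only [PR, integral_finsetSum _ fun i _ => ((hf i).integrable).const_mul (v i),
    integral_const_mul, Finset.mul_sum]
  exact Finset.sum_congr rfl fun i _ => by ring

lemma PC_sum_mul_ofReal {f : ι → X → ℝ} (hf : ∀ i, BddMeas (f i)) (c : ι → ℂ) :
    PC φ κ (fun x => ∑ i, c i * (f i x : ℂ)) =
      fun x => ∑ i, c i * (PR φ κ (f i) x : ℂ) := by
  funext x
  simp only [PC, PR]
  rw [integral_finsetSum _ fun i _ => ?_, Finset.mul_sum]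
  · refine Finset.sum_congr rfl fun i _ => ?_
    rw [integral_const_mul, integral_complex_ofReal]
    push_cast
    ring
  · exact (hf i).integrable.ofReal.const_mul (c i)

lemma PR_iterate_eq_sum_pow [DecidableEq ι] {f : ι → X → ℝ} (hf : ∀ i, BddMeas (f i))
    {A : Matrix ι ι ℝ} (hA : ∀ i, PR φ κ (f i) = fun x => ∑ j, A i j * f j x)
    (n : ℕ) (i : ι) :
    (PR φ κ)^[n] (f i) = fun x => ∑ j, (A ^ n) i j * f j x := by
  induction n with
  | zero => simp [Matrix.one_apply]
  | succ n ih =>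
    rw [Function.iterate_succ_apply', ih, PR_sum_mul hf]
    funext x
    simp only [hA, pow_succ, Matrix.mul_apply, Finset.mul_sum, Finset.sum_mul]
    rw [Finset.sum_comm]
    exact Finset.sum_congr rfl fun j _ => Finset.sum_congr rfl fun l _ => by ring

end Koopman

section DisjointSupports

variable {X ι : Type*} {f : ι → X → ℝ} (hnn : ∀ i x, 0 ≤ f i x)
  (hdisj : ∀ i j, i ≠ j → ∀ x, ¬ (0 < f i x ∧ 0 < f j x))
include hnn hdisj

lemma eq_zero_of_pos_of_ne {i j : ι} {x : X} (hx : 0 < f j x) (hij : i ≠ j) : f i x = 0 :=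
  ((hnn i x).lt_or_eq.resolve_left fun hi => hdisj i j hij x ⟨hi, hx⟩).symm

variable [Fintype ι]

lemma sum_mul_eq_of_pos (v : ι → ℝ) {j : ι} {x : X} (hx : 0 < f j x) :
    ∑ i, v i * f i x = v j * f j x :=
  Fintype.sum_eq_single j fun i hij => by rw [eq_zero_of_pos_of_ne hnn hdisj hx hij, mul_zero]

lemma sum_mul_ofReal_eq_of_pos (c : ι → ℂ) {j : ι} {x : X} (hx : 0 < f j x) :
    ∑ i, c i * (f i x : ℂ) = c j * f j x :=
  Fintype.sum_eq_single j fun i hij => by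
    rw [eq_zero_of_pos_of_ne hnn hdisj hx hij, Complex.ofReal_zero, mul_zero]

variable (hpos : ∀ i, ∃ x, 0 < f i x)
include hpos

lemma coeff_eq_of_sum_mul_ofReal_eq {c d : ι → ℂ}
    (h : ∀ x, ∑ i, c i * (f i x : ℂ) = ∑ i, d i * (f i x : ℂ)) : c = d := by
  funext j
  obtain ⟨x, hx⟩ := hpos j
  have hj := h x
  rw [sum_mul_ofReal_eq_of_pos hnn hdisj c hx, sum_mul_ofReal_eq_of_pos hnn hdisj d hx] at hj
  exact mul_right_cancel₀ (Complex.ofReal_ne_zero.mpr hx.ne') hj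

lemma coeff_eq_of_sum_mul_eq {v w : ι → ℝ}
    (h : ∀ x, ∑ i, v i * f i x = ∑ i, w i * f i x) : v = w := by
  funext j
  obtain ⟨x, hx⟩ := hpos j
  have hj := h x
  rw [sum_mul_eq_of_pos hnn hdisj v hx, sum_mul_eq_of_pos hnn hdisj w hx] at hj
  exact mul_right_cancel₀ hx.ne' hj

lemma coeff_nonneg_of_sum_mul_nonneg {v : ι → ℝ} (h : ∀ x, 0 ≤ ∑ i, v i * f i x)
    (j : ι) : 0 ≤ v j := by
  obtain ⟨x, hx⟩ := hpos j
  have hj := h x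
  rw [sum_mul_eq_of_pos hnn hdisj v hx] at hj
  exact nonneg_of_mul_nonneg_left hj hx

end DisjointSupports

lemma Matrix.eq_of_pos_of_pos_of_mul_eq_one {n R : Type*} [Fintype n] [DecidableEq n]
    [CommRing R] [LinearOrder R] [IsStrictOrderedRing R] {A C : Matrix n n R}
    (hA : ∀ i j, 0 ≤ A i j) (hC : ∀ i j, 0 ≤ C i j) (hAC : A * C = 1) {i j j' : n}
    (hj : 0 < A i j) (hj' : 0 < A i j') : j = j' := by
  have hCA : C * A = 1 := mul_eq_one_comm.mp hAC
  have hrow : ∀ {m}, 0 < A i m → ∀ l, l ≠ i → C m l = 0 := fun {m} hm l hl => by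
    have hil : ∑ p, A i p * C p l = 0 := by
      rw [← Matrix.mul_apply, hAC, Matrix.one_apply_ne hl.symm]
    have := (Finset.sum_eq_zero_iff_of_nonneg fun p _ => mul_nonneg (hA i p) (hC p l)).mp hil m
      (Finset.mem_univ _)
    exact (mul_eq_zero.mp this).resolve_left hm.ne'
  by_contra hne
  have hji : C j i = 0 := by
    have hjj' : ∑ l, C j l * A l j' = 0 := by
      rw [← Matrix.mul_apply, hCA, Matrix.one_apply_ne hne]
    rw [Fintype.sum_eq_single i fun l hl => by rw [hrow hj l hl, zero_mul]] at hjj'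
    exact (mul_eq_zero.mp hjj').resolve_right hj'.ne'
  have hjj : ∑ l, C j l * A l j = 1 := by rw [← Matrix.mul_apply, hCA, Matrix.one_apply_eq]
  rw [Fintype.sum_eq_single i fun l hl => by rw [hrow hj l hl, zero_mul], hji, zero_mul] at hjj
  exact zero_ne_one hjj

lemma isPrimitiveRoot_rootU (k : ℕ) [NeZero k] : IsPrimitiveRoot (rootU k (1 % k)) k := by
  have hcop : Nat.Coprime (1 % k) k := (Nat.gcd_rec k 1).symm.trans (Nat.gcd_one_right k)
  simpa only [rootU, mul_div_assoc] using
    Complex.isPrimitiveRoot_exp_of_coprime (1 % k) k (NeZero.ne k) hcop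

lemma injective_pow_apply_of_isPrimitiveRoot {α K : Type*} [CommMonoidWithZero K]
    [IsCancelMulZero K] {ρ : Equiv.Perm α} {c : α → K} {ω : K} {k : ℕ} (hω : IsPrimitiveRoot ω k)
    (hc : ∀ m, c (ρ m) = ω * c m) {l : α} (hl : c l ≠ 0) :
    Function.Injective fun i : Fin k => (ρ ^ (i : ℕ)) l := by
  have hpow : ∀ n, c ((ρ ^ n) l) = ω ^ n * c l := fun n => by
    induction n with
    | zero => simp
    | succ n ih => rw [pow_succ', Equiv.Perm.mul_apply, hc, ih, pow_succ', mul_assoc]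
  intro i i' h
  have := congrArg c h
  simp only [hpow] at this
  exact Fin.ext (hω.pow_inj i.isLt i'.isLt (mul_right_cancel₀ hl this))

lemma exists_perm_apply_add_one {k : ℕ} [NeZero k] {ρ : Equiv.Perm (Fin k)} (hρ : ρ ^ k = 1)
    {l : Fin k} (hinj : Function.Injective fun i : Fin k => (ρ ^ (i : ℕ)) l) :
    ∃ σ : Equiv.Perm (Fin k), ∀ i, σ (i + 1) = ρ (σ i) := by
  refine ⟨Equiv.ofBijective _ hinj.bijective_of_finite, fun i => ?_⟩
  simp only [Equiv.ofBijective_apply]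
  rw [Fin.val_add, Fin.val_one', Nat.add_mod_mod, ← pow_eq_pow_mod _ hρ, pow_succ',
    Equiv.Perm.mul_apply]

section MetricMeasure

variable {X : Type*} [MetricSpace X] [MeasurableSpace X] {μ : Measure X} {κ : Kernel X X}
  {φ : X → ℝ}

lemma Setup.isOpenPosMeasure (h : Setup μ κ φ) : μ.IsOpenPosMeasure :=
  ⟨fun U hU hne => (h.fullSupp U hU hne).ne'⟩

lemma Setup.isFiniteKernel (h : Setup μ κ φ) : IsFiniteKernel κ :=
  ⟨⟨1, ENNReal.one_lt_top, h.subMarkov⟩⟩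

variable {lam : ℝ} {g : X → ℝ}

lemma HypHA.measure_pos {T : Lp ℂ ⊤ μ →L[ℂ] Lp ℂ ⊤ μ} (hHA : HypHA μ κ φ T lam g) :
    0 < (μ {x | 0 < g x}).toReal := by
  have := hHA.setup.isOpenPosMeasure
  have := hHA.setup.prob
  obtain ⟨x, hx⟩ := Function.ne_iff.mp hHA.g_ne
  refine ENNReal.toReal_pos ((isOpen_lt continuous_const hHA.g_cont).measure_ne_zero μ ?_)
    (measure_ne_top μ _)
  exact ⟨x, (hHA.g_nonneg x).lt_of_ne' hx⟩

variable {k : ℕ} {gi : Fin k → X → ℝ}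

lemma PreFamily.exists_pos (hgi : PreFamily μ κ φ lam g k gi) (i : Fin k) :
    ∃ x, 0 < gi i x := by
  obtain ⟨x, hx⟩ := Function.ne_iff.mp (hgi.indep.ne_zero i)
  exact ⟨x, (hgi.nonneg i x).lt_of_ne' hx⟩

lemma PreFamily.continuous_sum_mul (hgi : PreFamily μ κ φ lam g k gi) (v : Fin k → ℝ) :
    Continuous fun x => ∑ i, v i * gi i x := by
  have := hgi.cont
  fun_prop

lemma PreFamily.continuous_sum_mul_ofReal (hgi : PreFamily μ κ φ lam g k gi)
    (c : Fin k → ℂ) : Continuous fun x => ∑ i, c i * (gi i x : ℂ) := by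
  have := hgi.cont
  fun_prop

end MetricMeasure

section Family

variable {μ : Measure M} {κ : Kernel M M} {φ : M → ℝ}
  {T : Lp ℂ ⊤ μ →L[ℂ] Lp ℂ ⊤ μ} {lam : ℝ} {g : M → ℝ} {k : ℕ} {gi : Fin k → M → ℝ}

lemma PreFamily.iterate_ae_eq (hgi : PreFamily μ κ φ lam g k gi) (i : Fin k) :
    (PC φ κ)^[k] (fun x => (gi i x : ℂ)) =ᵐ[μ] fun x => (lam : ℂ) ^ k * gi i x :=
  (hgi.span_ker _).mpr ⟨Pi.single i 1, ae_of_all _ fun x => by simp [Pi.single_apply]⟩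
    (Complex.continuous_ofReal.comp (hgi.cont i)).bddMeasC

/-- `P` leaves `ker(P^k - lam^k)` invariant, and `P g_i` is continuous. -/
lemma PreFamily.exists_matrix (hHA : HypHA μ κ φ T lam g) (hgi : PreFamily μ κ φ lam g k gi) :
    ∃ A : Matrix (Fin k) (Fin k) ℝ,
      ∀ i, PR φ κ (gi i) = fun x => ∑ j, A i j * gi j x := by
  have := hHA.setup.isOpenPosMeasure
  have hc : ∀ i, ∃ c : Fin k → ℂ,
      ∀ x, (PR φ κ (gi i) x : ℂ) = ∑ j, c j * (gi j x : ℂ) := by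
    intro i
    have hcont : Continuous fun x => (PR φ κ (gi i) x : ℂ) :=
      Complex.continuous_ofReal.comp (hHA.strongFeller _ (hgi.cont i).bddMeas)
    have hker := PC_iterate_PC_eq_mul hHA.setup.ac (hgi.iterate_ae_eq i)
    rw [PC_ofReal] at hker
    obtain ⟨c, hc⟩ := (hgi.span_ker _).mp fun _ => hker.eventuallyEq
    exact ⟨c, congrFun ((hcont.ae_eq_iff_eq μ (hgi.continuous_sum_mul_ofReal c)).mp hc)⟩
  choose c hc using hc
  refine ⟨fun i j => (c i j).re, fun i => funext fun x => ?_⟩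
  simpa [Complex.re_sum] using congrArg Complex.re (hc i x)

variable {A : Matrix (Fin k) (Fin k) ℝ}

lemma PreFamily.sum_row (hHA : HypHA μ κ φ T lam g) (hgi : PreFamily μ κ φ lam g k gi)
    (hA : ∀ i, PR φ κ (gi i) = fun x => ∑ j, A i j * gi j x) (i : Fin k) :
    ∑ j, A i j = lam := by
  have := hHA.setup.prob
  have hint : ∫ x, PR φ κ (gi i) x ∂μ = (∑ j, A i j) * (μ {x | 0 < g x}).toReal := by
    rw [hA, integral_finsetSum _ fun j _ => ((hgi.cont j).bddMeas.integrable).const_mul _,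
      Finset.sum_mul]
    simp only [integral_const_mul, hgi.integral]
  rw [hHA.Pstar _ (hgi.cont i).bddMeas, hgi.integral] at hint
  exact (mul_right_cancel₀ hHA.measure_pos.ne' hint).symm

lemma PreFamily.pow_apply_nonneg (hHA : HypHA μ κ φ T lam g)
    (hgi : PreFamily μ κ φ lam g k gi) (hA : ∀ i, PR φ κ (gi i) = fun x => ∑ j, A i j * gi j x)
    (n : ℕ) (i j : Fin k) :
    0 ≤ (A ^ n) i j := by
  have := hHA.setup.isFiniteKernel
  have h := PR_iterate_eq_sum_pow (fun l => (hgi.cont l).bddMeas) hA n i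
  refine coeff_nonneg_of_sum_mul_nonneg hgi.nonneg hgi.disj hgi.exists_pos (fun x => ?_) j
  rw [← congrFun h x]
  exact PR_iterate_nonneg (hgi.nonneg i) n x

lemma PreFamily.PR_iterate_eq_pow_mul (hHA : HypHA μ κ φ T lam g)
    (hgi : PreFamily μ κ φ lam g k gi) (hA : ∀ i, PR φ κ (gi i) = fun x => ∑ j, A i j * gi j x)
    (i : Fin k) :
    (PR φ κ)^[k] (gi i) = fun x => lam ^ k * gi i x := by
  have := hHA.setup.isOpenPosMeasure
  have := hHA.setup.isFiniteKernel
  have hae : (PR φ κ)^[k] (gi i) =ᵐ[μ] fun x => lam ^ k * gi i x := by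
    filter_upwards [hgi.iterate_ae_eq i] with x hx
    rw [PC_iterate_ofReal] at hx
    beta_reduce at hx
    exact_mod_cast hx
  rw [PR_iterate_eq_sum_pow (fun l => (hgi.cont l).bddMeas) hA] at hae ⊢
  exact (Continuous.ae_eq_iff_eq μ (hgi.continuous_sum_mul _)
    (continuous_const.mul (hgi.cont i))).mp hae

lemma PreFamily.pow_eq_smul_one (hHA : HypHA μ κ φ T lam g) (hgi : PreFamily μ κ φ lam g k gi)
    (hA : ∀ i, PR φ κ (gi i) = fun x => ∑ j, A i j * gi j x) :
    A ^ k = lam ^ k • (1 : Matrix (Fin k) (Fin k) ℝ) := by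
  have := hHA.setup.isFiniteKernel
  ext i j
  refine congrFun (coeff_eq_of_sum_mul_eq hgi.nonneg hgi.disj hgi.exists_pos fun x => ?_) j
  rw [← congrFun (PR_iterate_eq_sum_pow (fun l => (hgi.cont l).bddMeas) hA k i) x,
    hgi.PR_iterate_eq_pow_mul hHA hA]
  simp [Matrix.one_apply]

variable [NeZero k]

/-- The matrix of `P` on the `g_i` is nonnegative with the nonnegative inverse
`lam^{-k} A^{k-1}`, hence has exactly one positive entry per row. -/
lemma PreFamily.exists_PR_eq_mul (hHA : HypHA μ κ φ T lam g)
    (hgi : PreFamily μ κ φ lam g k gi) :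
    ∃ τ : Fin k → Fin k, ∀ i, PR φ κ (gi i) = fun x => lam * gi (τ i) x := by
  obtain ⟨A, hA⟩ := hgi.exists_matrix hHA
  have hnn := hgi.pow_apply_nonneg hHA hA
  have hA0 : ∀ i j, 0 ≤ A i j := fun i j => by simpa using hnn 1 i j
  have hAC : A * ((lam ^ k)⁻¹ • A ^ (k - 1)) = 1 := by
    rw [Matrix.mul_smul, ← pow_succ', Nat.sub_add_cancel NeZero.one_le,
      hgi.pow_eq_smul_one hHA hA, smul_smul, inv_mul_cancel₀ (pow_pos hHA.lam_pos k).ne',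
      one_smul]
  have huniq : ∀ {i j j'}, 0 < A i j → 0 < A i j' → j = j' :=
    Matrix.eq_of_pos_of_pos_of_mul_eq_one hA0
      (fun i j => smul_nonneg (inv_nonneg.mpr (pow_pos hHA.lam_pos k).le) (hnn _ i j)) hAC
  have hex : ∀ i, ∃ j, 0 < A i j := fun i => by
    by_contra! h
    have := (hgi.sum_row hHA hA i).symm.trans_le (Finset.sum_nonpos fun j _ => h j)
    exact hHA.lam_pos.not_ge this
  choose τ hτ using hex
  have hzero : ∀ i j, j ≠ τ i → A i j = 0 := fun i j hj =>
    ((hA0 i j).lt_or_eq.resolve_left fun h => hj (huniq h (hτ i))).symm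
  have hdiag : ∀ i, A i (τ i) = lam := fun i => by
    rw [← hgi.sum_row hHA hA i, Fintype.sum_eq_single (τ i) (hzero i)]
  refine ⟨τ, fun i => ?_⟩
  rw [hA]
  funext x
  rw [Fintype.sum_eq_single (τ i) fun j hj => by rw [hzero i j hj, zero_mul], hdiag]

/-- `τ` is a permutation because `P^k = lam^k` on the `g_i`. -/
lemma PreFamily.exists_perm_PR_eq_mul (hHA : HypHA μ κ φ T lam g)
    (hgi : PreFamily μ κ φ lam g k gi) :
    ∃ τ : Equiv.Perm (Fin k),
      τ ^ k = 1 ∧ ∀ i, PR φ κ (gi i) = fun x => lam * gi (τ i) x := by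
  obtain ⟨τ, hτ⟩ := hgi.exists_PR_eq_mul hHA
  obtain ⟨A, hA⟩ := hgi.exists_matrix hHA
  have hiter : ∀ n i, (PR φ κ)^[n] (gi i) = fun x => lam ^ n * gi (τ^[n] i) x := by
    intro n
    induction n with
    | zero => simp
    | succ n ih =>
      intro i
      rw [Function.iterate_succ_apply', ih, PR_const_mul, hτ]
      funext x
      rw [Function.iterate_succ_apply', pow_succ, mul_assoc]
  have hperiod : ∀ i, τ^[k] i = i := fun i => by
    have h := (hiter k i).symm.trans (hgi.PR_iterate_eq_pow_mul hHA hA i)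
    refine hgi.indep.injective (funext fun x => ?_)
    exact mul_left_cancel₀ (pow_pos hHA.lam_pos k).ne' (congrFun h x)
  have hinj : Function.Injective τ := by
    refine Function.LeftInverse.injective (g := τ^[k - 1]) fun i => ?_
    rw [← Function.iterate_succ_apply, Nat.succ_eq_add_one, Nat.sub_add_cancel NeZero.one_le,
      hperiod]
  refine ⟨Equiv.ofBijective τ hinj.bijective_of_finite, ?_, hτ⟩
  ext i
  rw [Equiv.Perm.coe_pow]
  exact congrArg Fin.val (hperiod i)

lemma PreFamily.exists_coeff_symm_eq_rootU_mul (hHA : HypHA μ κ φ T lam g)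
    (hk : PerSpecEq μ κ φ lam k) (hgi : PreFamily μ κ φ lam g k gi) {τ : Equiv.Perm (Fin k)}
    (hτ : ∀ i, PR φ κ (gi i) = fun x => lam * gi (τ i) x) :
    ∃ c : Fin k → ℂ, c ≠ 0 ∧ ∀ m, c (τ.symm m) = rootU k (1 % k) * c m := by
  have := hHA.setup.isOpenPosMeasure
  have := hHA.setup.isFiniteKernel
  set ω := rootU k (1 % k)
  have hω : IsPrimitiveRoot ω k := isPrimitiveRoot_rootU k
  obtain ⟨-, f, -, hf0, hf⟩ := (hk (lam * ω)).mpr ⟨1 % k, Nat.mod_lt _ (NeZero.pos k), rfl⟩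
  have hfk : (PC φ κ)^[k] f =ᵐ[μ] fun x => (lam : ℂ) ^ k * f x := by
    simpa only [mul_pow, hω.pow_eq_one, mul_one] using PC_iterate_ae_eq_pow_mul hHA.setup.ac hf k
  obtain ⟨c, hc⟩ := (hgi.span_ker f).mp fun _ => hfk
  refine ⟨c, fun hc0 => hf0 (hc.trans (ae_of_all _ fun x => by simp [hc0])), fun m => ?_⟩
  have hPf : PC φ κ f = fun x => ∑ m, (c (τ.symm m) * lam) * (gi m x : ℂ) := by
    rw [PC_congr_ae hHA.setup.ac hc, PC_sum_mul_ofReal fun l => (hgi.cont l).bddMeas]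
    funext x
    rw [← Equiv.sum_comp τ fun m => c (τ.symm m) * lam * (gi m x : ℂ)]
    simp only [hτ, Equiv.symm_apply_apply]
    push_cast
    exact Finset.sum_congr rfl fun l _ => by ring
  have hαf : PC φ κ f =ᵐ[μ] fun x => ∑ m, (lam * ω * c m) * (gi m x : ℂ) := by
    filter_upwards [hf, hc] with x hfx hcx
    rw [hfx, hcx, Finset.mul_sum]
    exact Finset.sum_congr rfl fun l _ => by ring
  rw [hPf, Continuous.ae_eq_iff_eq μ (hgi.continuous_sum_mul_ofReal _)
    (hgi.continuous_sum_mul_ofReal _)] at hαf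
  have hm := congrFun (coeff_eq_of_sum_mul_ofReal_eq hgi.nonneg hgi.disj hgi.exists_pos
    (congrFun hαf)) m
  rw [mul_comm, mul_assoc] at hm
  exact mul_left_cancel₀ (Complex.ofReal_ne_zero.mpr hHA.lam_pos.ne') hm

lemma PreFamily.eq_average (hHA : HypHA μ κ φ T lam g) (hgi : PreFamily μ κ φ lam g k gi)
    {τ : Equiv.Perm (Fin k)} (hτ : ∀ i, PR φ κ (gi i) = fun x => lam * gi (τ i) x) :
    g = fun x => (1 / (k : ℝ)) * ∑ i, gi i x := by
  have := hHA.setup.isOpenPosMeasure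
  have := hHA.setup.isFiniteKernel
  have := hHA.setup.prob
  simp only [Finset.mul_sum]
  have hcont : Continuous fun x => ∑ i, 1 / (k : ℝ) * gi i x := hgi.continuous_sum_mul _
  have heig : PR φ κ (fun x => ∑ i, 1 / (k : ℝ) * gi i x)
      = fun x => lam * ∑ i, 1 / (k : ℝ) * gi i x := by
    rw [PR_sum_mul fun i => (hgi.cont i).bddMeas]
    funext x
    simp only [hτ, Finset.mul_sum]
    refine (Finset.sum_congr rfl fun i _ => ?_).trans
      (Equiv.sum_comp τ fun i => lam * (1 / (k : ℝ) * gi i x))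
    ring
  obtain ⟨r, hr⟩ := hHA.eigen_dim _ hcont.bddMeas heig.eventuallyEq
  replace hr : (fun x => ∑ i, 1 / (k : ℝ) * gi i x) = fun x => r * g x :=
    (Continuous.ae_eq_iff_eq μ hcont (continuous_const.mul hHA.g_cont)).mp hr
  have hmass : ∫ x, ∑ i, 1 / (k : ℝ) * gi i x ∂μ = (μ {x | 0 < g x}).toReal := by
    rw [integral_finsetSum _ fun i _ => ((hgi.cont i).bddMeas.integrable).const_mul _]
    simp only [integral_const_mul, hgi.integral, Finset.sum_const, Finset.card_univ,
      Fintype.card_fin, nsmul_eq_mul]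
    field_simp [NeZero.ne k]
  rw [hr, integral_const_mul, hHA.g_int] at hmass
  rw [hr, mul_eq_right₀ hHA.measure_pos.ne' |>.mp hmass]
  simp

end Family

/-- **Lemma A.6.** Under Hypothesis (HA) with
`σ_per(P) = {lam e^{2πi j/k}}_{j<k}`, a family as in the conclusion of Proposition A.5 can be
relabelled so that `P g_i = lam g_{i-1 (mod k)}`, and then `g = (1/k) ∑ g_i`. -/
theorem statement7 (μ : Measure M) (κ : Kernel M M) (φ : M → ℝ)
    (T : Lp ℂ ⊤ μ →L[ℂ] Lp ℂ ⊤ μ) (lam : ℝ) (g : M → ℝ)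
    (hHA : HypHA μ κ φ T lam g)
    (k : ℕ) [NeZero k] (hk : PerSpecEq μ κ φ lam k)
    (gi : Fin k → M → ℝ) (hgi : PreFamily μ κ φ lam g k gi) :
    ∃ σ : Equiv.Perm (Fin k),
      (∀ i : Fin k, PR φ κ (gi (σ i)) = fun x => lam * gi (σ (i - 1)) x) ∧
      g = fun x => (1 / (k : ℝ)) * ∑ i, gi (σ i) x := by
  obtain ⟨τ, hτk, hτ⟩ := hgi.exists_perm_PR_eq_mul hHA
  obtain ⟨c, hc0, hc⟩ := hgi.exists_coeff_symm_eq_rootU_mul hHA hk hτ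
  obtain ⟨l, hl⟩ := Function.ne_iff.mp hc0
  have hρ : τ.symm ^ k = 1 := by rw [← Equiv.Perm.inv_def, inv_pow, hτk, inv_one]
  obtain ⟨σ, hσ⟩ := exists_perm_apply_add_one hρ
    (injective_pow_apply_of_isPrimitiveRoot (isPrimitiveRoot_rootU k) hc hl)
  refine ⟨σ, fun i => ?_, ?_⟩
  · have hσi : σ i = τ.symm (σ (i - 1)) := by rw [← hσ, sub_add_cancel]
    rw [hτ, hσi, Equiv.apply_symm_apply]
  · rw [hgi.eq_average hHA hτ]
    funext x
    rw [Equiv.sum_comp σ fun i => gi i x]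

end

end QEM
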